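/- In the dual MDP-policy pair, the value functions agree: for every state s of the original MDP and action a with π(a|s) > 0, the action-value Q^E of the dual pair at the dual state (s,a) (averaged over dual actions according to π^E) equals the action-value Q^A(s,a) of the original pair; consequently the dual state-value V^E(s,a) equals Q^A(s,a). -/

import Mathlib

/-! Averaging the dual action-value over next states is the dual state-value, so by induction on
the horizon `VE n (s, a) = QA n s a`: the dual Bellman step then averages `R s a + γ · (next value)`
against the probability vector `P s a`, which reproduces the Bellman step of `QA`. -/

open Finset

theorem sum_mul_const_add_mul {ι : Type*} (t : Finset ι) (p f : ι → ℝ) (hp : ∑ i ∈ t, p i = 1)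
    (r γ : ℝ) : ∑ i ∈ t, p i * (r + γ * f i) = r + γ * ∑ i ∈ t, p i * f i := by
  simp only [mul_add, sum_add_distrib, ← sum_mul, hp, mul_left_comm _ γ, ← mul_sum, one_mul]

/-- Value functions of the dual pair agree with those of the original pair: for every state `s`
and action `a` with `pi s a > 0`, the dual action-value `QE` at dual state `(s,a)` averaged over
dual actions according to `piE` equals the original action-value `QA s a`; consequently the dual
state-value `VE (s,a)` equals `QA s a`. Values are defined by backward induction over horizon. -/
theorem dual_value_functions_agree
    {S A : Type*} [Fintype S] [Fintype A]
    (P : S → A → S → ℝ) (pi : S → A → ℝ) (R : S → A → ℝ) (γ : ℝ) (T : ℕ)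
    (hP : ∀ s a, ∑ s', P s a s' = 1)
    (QA : ℕ → S → A → ℝ) (QE : ℕ → S × A → S → ℝ) (VE : ℕ → S × A → ℝ)
    (hQA0 : ∀ s a, QA 0 s a = 0)
    (hQA : ∀ n s a, QA (n + 1) s a = R s a + γ * ∑ s', P s a s' * ∑ a', pi s' a' * QA n s' a')
    (hQE0 : ∀ sa s', QE 0 sa s' = 0)
    (hQE : ∀ n sa s', QE (n + 1) sa s'
      = R sa.1 sa.2 + γ * ∑ a'', pi s' a'' * VE n (s', a''))
    (hVE : ∀ n sa, VE n sa = ∑ s', P sa.1 sa.2 s' * QE n sa s') :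
    ∀ s a, 0 < pi s a →
      (∑ s', P s a s' * QE T (s, a) s') = QA T s a ∧ VE T (s, a) = QA T s a := by
  have hVE_eq_QA : ∀ n s a, VE n (s, a) = QA n s a := by
    intro n
    induction n with
    | zero => simp [hVE, hQE0, hQA0]
    | succ n ih =>
      intro s a
      rw [hVE, hQA]
      simp only [hQE, ih]
      exact sum_mul_const_add_mul _ _ _ (hP s a) _ _
  intro s a _
  exact ⟨(hVE T (s, a)).symm.trans (hVE_eq_QA T s a), hVE_eq_QA T s a⟩
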